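/- Let (𝓑,𝓛,θ) be a Boolean dynamical system with associated C*-correspondence X(𝓑,𝓛,θ,𝓘_α) = ⊕_{α∈𝓛} X_α over 𝓐(𝓑,𝓛,θ), with left action φ. Then φ(χ_A) is a generalized compact operator (i.e., χ_A ∈ J(X)=φ⁻¹(𝔎(X))) if and only if λ_A := |{α ∈ 𝓛 : θ_α(A) ≠ ∅}| is finite; moreover in that case φ(χ_A) = Σ_{α∈Δ_A} Θ_{e_{α,θ_α(A)}, e_{α,θ_α(A)}}. -/

import Mathlib

open scoped ZeroAtInfty
open Filter Topology

/-- The character space 𝓑̂ of a generalized Boolean algebra 𝓑: the space of ultrafilters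
of 𝓑, realized as the nonzero Boolean characters 𝓑 → Bool, with the topology of
pointwise convergence. -/
abbrev BoolCharSpace (B : Type*) [GeneralizedBooleanAlgebra B] : Type _ :=
  {φ : B → Bool // (∀ a b, φ (a ⊓ b) = (φ a && φ b)) ∧ (∀ a b, φ (a ⊔ b) = (φ a || φ b)) ∧
    (∀ a b, φ (a \ b) = (φ a && !φ b)) ∧ φ ⊥ = false ∧ ∃ a, φ a = true}

variable {B : Type*} [GeneralizedBooleanAlgebra B]

theorem isCompact_cylinder (A : B) :
    IsCompact {φ : BoolCharSpace B | φ.1 A = true} := by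
  rw [Subtype.isCompact_iff]
  set K : Set (B → Bool) :=
    {φ | ((∀ a b, φ (a ⊓ b) = (φ a && φ b)) ∧ (∀ a b, φ (a ⊔ b) = (φ a || φ b)) ∧
      (∀ a b, φ (a \ b) = (φ a && !φ b)) ∧ φ ⊥ = false) ∧ φ A = true} with hK
  have himg : Subtype.val '' {φ : BoolCharSpace B | φ.1 A = true} = K := by
    ext φ
    constructor
    · rintro ⟨ψ, hψ, rfl⟩
      exact ⟨⟨ψ.2.1, ψ.2.2.1, ψ.2.2.2.1, ψ.2.2.2.2.1⟩, hψ⟩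
    · rintro ⟨⟨h1, h2, h3, h4⟩, h5⟩
      exact ⟨⟨φ, h1, h2, h3, h4, ⟨A, h5⟩⟩, h5, rfl⟩
  rw [himg]
  have c1 : IsClosed {φ : B → Bool | ∀ a b, φ (a ⊓ b) = (φ a && φ b)} := by
    have he : {φ : B → Bool | ∀ a b, φ (a ⊓ b) = (φ a && φ b)} =
        ⋂ (a : B), ⋂ (b : B), {φ : B → Bool | φ (a ⊓ b) = (φ a && φ b)} := by
      ext φ; simp
    rw [he]
    refine isClosed_iInter fun a => isClosed_iInter fun b => ?_
    have hcont : Continuous ((fun p : Bool × Bool => p.1 && p.2) ∘ fun φ : B → Bool => (φ a, φ b)) :=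
      Continuous.comp continuous_of_discreteTopology
        ((continuous_apply a).prodMk (continuous_apply b))
    exact isClosed_eq (continuous_apply _) hcont
  have c2 : IsClosed {φ : B → Bool | ∀ a b, φ (a ⊔ b) = (φ a || φ b)} := by
    have he : {φ : B → Bool | ∀ a b, φ (a ⊔ b) = (φ a || φ b)} =
        ⋂ (a : B), ⋂ (b : B), {φ : B → Bool | φ (a ⊔ b) = (φ a || φ b)} := by
      ext φ; simp
    rw [he]
    refine isClosed_iInter fun a => isClosed_iInter fun b => ?_
    have hcont : Continuous ((fun p : Bool × Bool => p.1 || p.2) ∘ fun φ : B → Bool => (φ a, φ b)) :=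
      Continuous.comp continuous_of_discreteTopology
        ((continuous_apply a).prodMk (continuous_apply b))
    exact isClosed_eq (continuous_apply _) hcont
  have c3 : IsClosed {φ : B → Bool | ∀ a b, φ (a \ b) = (φ a && !φ b)} := by
    have he : {φ : B → Bool | ∀ a b, φ (a \ b) = (φ a && !φ b)} =
        ⋂ (a : B), ⋂ (b : B), {φ : B → Bool | φ (a \ b) = (φ a && !φ b)} := by
      ext φ; simp
    rw [he]
    refine isClosed_iInter fun a => isClosed_iInter fun b => ?_
    have hcont : Continuous ((fun p : Bool × Bool => p.1 && !p.2) ∘ fun φ : B → Bool => (φ a, φ b)) :=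
      Continuous.comp continuous_of_discreteTopology
        ((continuous_apply a).prodMk (continuous_apply b))
    exact isClosed_eq (continuous_apply _) hcont
  have c4 : IsClosed {φ : B → Bool | φ ⊥ = false} :=
    isClosed_eq (continuous_apply _) continuous_const
  have c5 : IsClosed {φ : B → Bool | φ A = true} :=
    isClosed_eq (continuous_apply _) continuous_const
  have hKeq : K = ({φ : B → Bool | ∀ a b, φ (a ⊓ b) = (φ a && φ b)} ∩
      {φ | ∀ a b, φ (a ⊔ b) = (φ a || φ b)} ∩ {φ | ∀ a b, φ (a \ b) = (φ a && !φ b)} ∩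
      {φ | φ ⊥ = false}) ∩ {φ | φ A = true} := by
    ext φ
    simp only [hK, Set.mem_setOf_eq, Set.mem_inter_iff]
    tauto
  have hclosed : IsClosed K := by
    rw [hKeq]
    exact ((((c1.inter c2).inter c3).inter c4)).inter c5
  exact hclosed.isCompact

/-- χ_A = 1_{Z(A)} ∈ C₀(𝓑̂): the characteristic function of the compact open
cylinder set Z(A) = {φ ∈ 𝓑̂ : φ(A) = 1}. -/
noncomputable def chi (A : B) : C₀(BoolCharSpace B, ℂ) where
  toFun φ := if φ.1 A then 1 else 0
  continuous_toFun :=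
    (continuous_of_discreteTopology (f := fun t : Bool => if t then (1 : ℂ) else 0)).comp
      ((continuous_apply A).comp continuous_subtype_val)
  zero_at_infty' := by
    refine HasCompactSupport.is_zero_at_infty ?_
    refine HasCompactSupport.intro (isCompact_cylinder A) ?_
    intro φ hφ
    simp only [Set.mem_setOf_eq] at hφ
    simp [hφ]

/-- An ideal of a (generalized) Boolean algebra. -/
def BoolIdeal {B : Type*} [GeneralizedBooleanAlgebra B] (I : Set B) : Prop :=
  I.Nonempty ∧ (∀ a ∈ I, ∀ b ∈ I, a ⊔ b ∈ I) ∧ (∀ a ∈ I, ∀ b : B, a ⊓ b ∈ I)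

/-- An action on a generalized Boolean algebra. -/
def IsBoolAction {B : Type*} [GeneralizedBooleanAlgebra B] (f : B → B) : Prop :=
  (∀ a b, f (a ⊓ b) = f a ⊓ f b) ∧ (∀ a b, f (a ⊔ b) = f a ⊔ f b) ∧
    (∀ a b, f (a \ b) = f a \ f b) ∧ f ⊥ = ⊥


/-!
If `Δ_A` is finite, `φ(χ_A)` and `∑_{α ∈ Δ_A} Θ_{e_{α,θ_α(A)}, e_{α,θ_α(A)}}` agree on the
generators `e_{β,C}` (both give `e_{β, θ_β(A) ⊓ C}`), hence everywhere by density.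
Conversely, the vectors `u_α = e_{α,θ_α(A)}` are bounded by `1`, fixed by `φ(χ_A)`, of norm
exactly `1` for `α ∈ Δ_A`, and orthogonal to any given generator for all but one `α`. For every
`T ∈ 𝔎(X)` one has `T u_α → 0` along the cofinite filter: this holds for `Θ_{x,y}` since
`⟨y, u_α⟩ → 0`, and it survives sums and norm limits because the family `u_α` is bounded.
Hence `φ(χ_A) ∈ 𝔎(X)` forces `Δ_A` to be finite. The norm `‖χ_D‖ = 1` for `D ≠ ⊥` needs a
character of `𝓑` that is `1` at `D`; it comes from a prime ideal of `𝓑` avoiding `D`.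
-/

theorem Order.Ideal.exists_isPrime_notMem_of_ne_bot {C : B} (hC : C ≠ ⊥) :
    ∃ J : Order.Ideal B, J.IsPrime ∧ C ∉ J := by
  have hdisj : Disjoint (Order.PFilter.principal C : Set B) (Order.Ideal.principal (⊥ : B)) :=
    Set.disjoint_left.2 fun x hCx hx0 =>
      hC <| le_bot_iff.1 <|
        (Order.PFilter.mem_principal.1 hCx).trans (Order.Ideal.mem_principal.1 hx0)
  obtain ⟨J, hJ, -, hCJ⟩ := DistribLattice.prime_ideal_of_disjoint_filter_ideal hdisj
  exact ⟨J, hJ, Set.disjoint_left.1 hCJ (Order.PFilter.mem_principal.2 le_rfl)⟩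

theorem apply_sdiff_of_inf_sup_bot {φ : B → Bool} (hinf : ∀ a b, φ (a ⊓ b) = (φ a && φ b))
    (hsup : ∀ a b, φ (a ⊔ b) = (φ a || φ b)) (hbot : φ ⊥ = false) (a b : B) :
    φ (a \ b) = (φ a && !φ b) := by
  have hsplit : φ a = (φ a && φ b || φ (a \ b)) := by rw [← hinf, ← hsup, sup_inf_sdiff]
  have hdisj : (φ (a \ b) && φ b) = false := by rw [← hinf, inf_sdiff_self_left, hbot]
  revert hsplit hdisj
  cases φ a <;> cases φ b <;> cases φ (a \ b) <;> decide

theorem exists_boolChar_apply_eq_true {C : B} (hC : C ≠ ⊥) :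
    ∃ φ : BoolCharSpace B, φ.1 C = true := by
  classical
  obtain ⟨J, hJ, hCJ⟩ := Order.Ideal.exists_isPrime_notMem_of_ne_bot hC
  set φ : B → Bool := fun b => !decide (b ∈ J) with hφ
  have hinf : ∀ a b, φ (a ⊓ b) = (φ a && φ b) := fun a b => by
    have hiff : a ⊓ b ∈ J ↔ a ∈ J ∨ b ∈ J :=
      ⟨hJ.mem_or_mem, fun h => h.elim (J.lower inf_le_left) (J.lower inf_le_right)⟩
    by_cases ha : a ∈ J <;> by_cases hb : b ∈ J <;> simp [hφ, hiff, ha, hb]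
  have hsup : ∀ a b, φ (a ⊔ b) = (φ a || φ b) := fun a b => by
    by_cases ha : a ∈ J <;> by_cases hb : b ∈ J <;> simp [hφ, Order.Ideal.sup_mem_iff, ha, hb]
  have hbot : φ ⊥ = false := by simp [hφ, J.bot_mem]
  have hC : φ C = true := by simp [hφ, hCJ]
  exact ⟨⟨φ, hinf, hsup, apply_sdiff_of_inf_sup_bot hinf hsup hbot, hbot, C, hC⟩, hC⟩

theorem chi_apply (A : B) (φ : BoolCharSpace B) : chi A φ = if φ.1 A then 1 else 0 := rfl

theorem chi_bot : chi (⊥ : B) = 0 := by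
  ext φ
  simp [chi_apply, φ.2.2.2.2.1]

theorem norm_chi_le_one (A : B) : ‖chi A‖ ≤ 1 := by
  rw [← ZeroAtInftyContinuousMap.norm_toBCF_eq_norm]
  refine (BoundedContinuousFunction.norm_le zero_le_one).2 fun φ => ?_
  change ‖chi A φ‖ ≤ 1
  rw [chi_apply]
  split <;> simp

theorem norm_chi_of_ne_bot {A : B} (hA : A ≠ ⊥) : ‖chi A‖ = 1 := by
  obtain ⟨φ, hφ⟩ := exists_boolChar_apply_eq_true hA
  refine (norm_chi_le_one A).antisymm ?_
  calc (1 : ℝ) = ‖chi A φ‖ := by simp [chi_apply, hφ]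
    _ ≤ ‖chi A‖ := by
      rw [← ZeroAtInftyContinuousMap.norm_toBCF_eq_norm]
      exact (chi A).toBCF.norm_coe_le_norm φ

theorem tendsto_zero_of_mem_closure_span {ι 𝕜 Y E : Type*} [NormedField 𝕜]
    [SeminormedAddCommGroup Y] [Module 𝕜 Y] [SeminormedAddCommGroup E] [NormedSpace 𝕜 E]
    {l : Filter ι} {F : ι → Y →ₗ[𝕜] E} {C : ℝ} (hF : ∀ i y, ‖F i y‖ ≤ C * ‖y‖) {S : Set Y}
    (hS : ∀ s ∈ S, Tendsto (fun i => F i s) l (𝓝 0)) {y : Y}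
    (hy : y ∈ closure (Submodule.span 𝕜 S : Set Y)) : Tendsto (fun i => F i y) l (𝓝 0) := by
  let V : Submodule 𝕜 Y :=
    { carrier := {y | Tendsto (fun i => F i y) l (𝓝 0)}
      add_mem' := fun ha hb => by simpa using ha.add hb
      zero_mem' := by simpa using tendsto_const_nhds
      smul_mem' := fun c y hy => by simpa using hy.const_smul c }
  have hV : IsClosed (V : Set Y) :=
    (LipschitzWith.uniformEquicontinuous _ _ fun i =>
      AddMonoidHomClass.lipschitz_of_bound (F i) C (hF i)).equicontinuous.isClosed_setOfPred_tendsto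
      continuous_const
  exact closure_minimal (Submodule.span_le (p := V).2 hS) hV hy

/-- The axioms of a right Hilbert `𝔸`-module (positivity of `inn x x` aside), for an inner product
and a right action given as bare functions on a normed space. -/
structure HilbertModuleAxioms {𝔸 X : Type*} [NonUnitalCStarAlgebra 𝔸] [NormedAddCommGroup X]
    [NormedSpace ℂ X] (inn : X → X → 𝔸) (act : X → 𝔸 → X) : Prop where
  inn_add_right : ∀ x y z, inn x (y + z) = inn x y + inn x z
  inn_smul_right : ∀ (c : ℂ) (x y : X), inn x (c • y) = c • inn x y
  star_inn : ∀ x y, star (inn x y) = inn y x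
  inn_act : ∀ x y f, inn x (act y f) = inn x y * f
  norm_inn_le : ∀ x y, ‖inn x y‖ ≤ ‖x‖ * ‖y‖
  norm_sq : ∀ x, ‖x‖ ^ 2 = ‖inn x x‖

namespace HilbertModuleAxioms

variable {𝔸 X : Type*} [NonUnitalCStarAlgebra 𝔸] [NormedAddCommGroup X] [NormedSpace ℂ X]
  {inn : X → X → 𝔸} {act : X → 𝔸 → X}

def innₗ (h : HilbertModuleAxioms inn act) (x : X) : X →ₗ[ℂ] 𝔸 where
  toFun := inn x
  map_add' := h.inn_add_right x
  map_smul' c y := h.inn_smul_right c x y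

theorem eq_of_forall_inn_eq (h : HilbertModuleAxioms inn act) {a b : X}
    (hab : ∀ y, inn y a = inn y b) : a = b := by
  have hsq := h.norm_sq (a - b)
  rw [← sub_eq_zero, ← norm_eq_zero, ← sq_eq_zero_iff, hsq, norm_eq_zero]
  change h.innₗ (a - b) (a - b) = 0
  rw [map_sub, sub_eq_zero]
  exact hab _

theorem act_add_right (h : HilbertModuleAxioms inn act) (x : X) (f g : 𝔸) :
    act x (f + g) = act x f + act x g :=
  h.eq_of_forall_inn_eq fun y => by
    rw [h.inn_add_right, h.inn_act, h.inn_act, h.inn_act, mul_add]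

theorem act_smul_right (h : HilbertModuleAxioms inn act) (x : X) (c : ℂ) (f : 𝔸) :
    act x (c • f) = c • act x f :=
  h.eq_of_forall_inn_eq fun y => by
    rw [h.inn_smul_right, h.inn_act, h.inn_act, mul_smul_comm]

theorem norm_act_le (h : HilbertModuleAxioms inn act) (x : X) (f : 𝔸) :
    ‖act x f‖ ≤ ‖x‖ * ‖f‖ := by
  rcases (norm_nonneg (act x f)).eq_or_lt with h0 | hpos
  · rw [← h0]
    positivity
  refine le_of_mul_le_mul_left ?_ hpos
  calc ‖act x f‖ * ‖act x f‖ = ‖inn (act x f) x * f‖ := by rw [← sq, h.norm_sq, h.inn_act]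
    _ ≤ ‖inn (act x f) x‖ * ‖f‖ := norm_mul_le _ _
    _ ≤ ‖act x f‖ * ‖x‖ * ‖f‖ := by gcongr; exact h.norm_inn_le _ _
    _ = ‖act x f‖ * (‖x‖ * ‖f‖) := mul_assoc _ _ _

def actₗ (h : HilbertModuleAxioms inn act) (x : X) : 𝔸 →ₗ[ℂ] X where
  toFun := act x
  map_add' := h.act_add_right x
  map_smul' := h.act_smul_right x

noncomputable def rankOne (h : HilbertModuleAxioms inn act) (x y : X) : X →L[ℂ] X :=
  ((h.actₗ x).comp (h.innₗ y)).mkContinuous (‖x‖ * ‖y‖) fun z =>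
    calc ‖act x (inn y z)‖ ≤ ‖x‖ * ‖inn y z‖ := h.norm_act_le _ _
      _ ≤ ‖x‖ * (‖y‖ * ‖z‖) := by gcongr; exact h.norm_inn_le _ _
      _ = ‖x‖ * ‖y‖ * ‖z‖ := (mul_assoc _ _ _).symm

theorem rankOne_apply (h : HilbertModuleAxioms inn act) (x y z : X) :
    h.rankOne x y z = act x (inn y z) :=
  rfl

theorem tendsto_apply_of_mem_closure_span (h : HilbertModuleAxioms inn act) {ι : Type*}
    {l : Filter ι} {u : ι → X} {C : ℝ} (hu : ∀ i, ‖u i‖ ≤ C) {D : Set X}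
    (hD : Dense (Submodule.span ℂ D : Set X)) (huD : ∀ d ∈ D, ∀ᶠ i in l, inn (u i) d = 0)
    {T : X →L[ℂ] X} (hT : T ∈ closure (Submodule.span ℂ
      {T : X →L[ℂ] X | ∃ x y : X, ∀ z, T z = act x (inn y z)} : Set (X →L[ℂ] X))) :
    Tendsto (fun i => T (u i)) l (𝓝 0) := by
  have hinn (y : X) : Tendsto (fun i => inn (u i) y) l (𝓝 0) :=
    tendsto_zero_of_mem_closure_span (F := fun i => h.innₗ (u i))
      (fun i y => (h.norm_inn_le _ _).trans (by gcongr; exact hu i))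
      (fun d hd => tendsto_const_nhds.congr' ((huD d hd).mono fun i hi => hi.symm))
      (hD.closure_eq ▸ Set.mem_univ y)
  refine tendsto_zero_of_mem_closure_span
    (F := fun i => (ContinuousLinearMap.apply ℂ X (u i)).toLinearMap)
    (fun i T => (T.le_opNorm _).trans (by rw [mul_comm]; gcongr; exact hu i)) ?_ hT
  rintro _ ⟨x, y, hxy⟩
  refine squeeze_zero_norm (fun i => ?_) (by simpa using (hinn y).norm.const_mul ‖x‖)
  rw [ContinuousLinearMap.coe_coe, ContinuousLinearMap.apply_apply, hxy, ← h.star_inn,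
    ← norm_star (inn (u i) y)]
  exact h.norm_act_le _ _

end HilbertModuleAxioms

section StandardVectors

variable {L X : Type*} [DecidableEq L] [NormedAddCommGroup X] [NormedSpace ℂ X] {I : L → Set B}
  {inn : X → X → C₀(BoolCharSpace B, ℂ)} {act : X → C₀(BoolCharSpace B, ℂ) → X} {e : L → B → X}

theorem norm_sq_e (h : HilbertModuleAxioms inn act)
    (he_inn : ∀ (α β : L) (A C : B), A ∈ I α → C ∈ I β →
      inn (e α A) (e β C) = if α = β then chi (A ⊓ C) else 0)
    {α : L} {C : B} (hC : C ∈ I α) : ‖e α C‖ ^ 2 = ‖chi C‖ := by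
  rw [h.norm_sq, he_inn α α C C hC hC, if_pos rfl, inf_idem]

theorem rankOne_e_apply_e (h : HilbertModuleAxioms inn act)
    (he_inn : ∀ (α β : L) (A C : B), A ∈ I α → C ∈ I β →
      inn (e α A) (e β C) = if α = β then chi (A ⊓ C) else 0)
    (hact_e : ∀ (α : L) (A C : B), A ∈ I α → act (e α A) (chi C) = e α (A ⊓ C))
    {α β : L} {D C : B} (hD : D ∈ I α) (hC : C ∈ I β) :
    h.rankOne (e α D) (e α D) (e β C) = if α = β then e β (D ⊓ C) else 0 := by
  rw [h.rankOne_apply, he_inn α β _ _ hD hC]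
  split_ifs with hαβ
  · subst hαβ
    rw [hact_e α _ _ hD, ← inf_assoc, inf_idem]
  · simpa using h.norm_act_le (e α D) 0

theorem eq_sum_rankOne (h : HilbertModuleAxioms inn act)
    (he_inn : ∀ (α β : L) (A C : B), A ∈ I α → C ∈ I β →
      inn (e α A) (e β C) = if α = β then chi (A ⊓ C) else 0)
    (hact_e : ∀ (α : L) (A C : B), A ∈ I α → act (e α A) (chi C) = e α (A ⊓ C))
    (hdense : Dense (Submodule.span ℂ {x : X | ∃ α : L, ∃ A ∈ I α, x = e α A} : Set X))
    {D : L → B} (hDI : ∀ α, D α ∈ I α) {Ψ : X →L[ℂ] X}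
    (hΨ : ∀ β, ∀ C ∈ I β, Ψ (e β C) = e β (D β ⊓ C)) {F : Finset L}
    (hF : ↑F = {α | D α ≠ ⊥}) :
    Ψ = ∑ α ∈ F, h.rankOne (e α (D α)) (e α (D α)) := by
  refine ContinuousLinearMap.ext_on hdense ?_
  rintro _ ⟨β, C, hC, rfl⟩
  rw [sum_apply, Finset.sum_congr rfl fun α _ => rankOne_e_apply_e h he_inn hact_e (hDI α) hC,
    Finset.sum_ite_eq', hΨ β C hC]
  split_ifs with hβ
  · rfl
  have hDβ : D β = ⊥ := by
    by_contra hne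
    exact hβ (by rw [← Finset.mem_coe, hF]; exact hne)
  have hsq := norm_sq_e h he_inn (hDI β)
  rw [hDβ, chi_bot, norm_zero, sq_eq_zero_iff, norm_eq_zero] at hsq
  rw [hDβ, bot_inf_eq, hsq]

theorem finite_of_mem_closure_span_rankOne (h : HilbertModuleAxioms inn act)
    (he_inn : ∀ (α β : L) (A C : B), A ∈ I α → C ∈ I β →
      inn (e α A) (e β C) = if α = β then chi (A ⊓ C) else 0)
    (hdense : Dense (Submodule.span ℂ {x : X | ∃ α : L, ∃ A ∈ I α, x = e α A} : Set X))
    {D : L → B} (hDI : ∀ α, D α ∈ I α) {Ψ : X →L[ℂ] X} (hΨ : ∀ β, Ψ (e β (D β)) = e β (D β))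
    (hmem : Ψ ∈ closure (Submodule.span ℂ
      {T : X →L[ℂ] X | ∃ x y : X, ∀ z, T z = act x (inn y z)} : Set (X →L[ℂ] X))) :
    {α | D α ≠ ⊥}.Finite := by
  have hle (α : L) : ‖e α (D α)‖ ≤ 1 := by
    refine (sq_le_one_iff₀ (norm_nonneg _)).1 ?_
    rw [norm_sq_e h he_inn (hDI α)]
    exact norm_chi_le_one _
  have horth : ∀ d ∈ {x : X | ∃ α : L, ∃ A ∈ I α, x = e α A},
      ∀ᶠ α in cofinite, inn (e α (D α)) d = 0 := by
    rintro _ ⟨β, C, hC, rfl⟩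
    filter_upwards [eventually_cofinite_ne β] with α hα
    rw [he_inn α β _ _ (hDI α) hC, if_neg hα]
  have hlim := h.tendsto_apply_of_mem_closure_span hle hdense horth hmem
  refine (eventually_cofinite.1
    ((tendsto_zero_iff_norm_tendsto_zero.1 hlim).eventually (gt_mem_nhds one_pos))).subset
    fun α hα => ?_
  have hsq := norm_sq_e h he_inn (hDI α)
  rw [norm_chi_of_ne_bot hα, pow_eq_one_iff_of_nonneg (norm_nonneg _) two_ne_zero] at hsq
  simp [hΨ, hsq]

end StandardVectors

theorem phi_chi_compact_iff_general {B L X : Type*} [GeneralizedBooleanAlgebra B] [DecidableEq L]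
    [NormedAddCommGroup X] [NormedSpace ℂ X]
    (θ : L → B → B)
    (I : L → Set B) (hRI : ∀ (α : L) (A : B), θ α A ∈ I α)
    -- the 𝓐-valued inner product on X (⟨x,y⟩ = Σ_α x_α* y_α)
    (inn : X → X → C₀(BoolCharSpace B, ℂ))
    -- the right action of 𝓐 on X
    (act : X → C₀(BoolCharSpace B, ℂ) → X)
    -- the standard vectors e_{α,A} (A ∈ 𝓘_α), spanning a dense subspace of X
    (e : L → B → X)
    (hinn_add_right : ∀ x y z, inn x (y + z) = inn x y + inn x z)
    (hinn_smul : ∀ (c : ℂ) (x y : X), inn x (c • y) = c • inn x y)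
    (hinn_star : ∀ x y, star (inn x y) = inn y x)
    (hinn_act : ∀ x y f, inn x (act y f) = inn x y * f)
    (hCS : ∀ x y, ‖inn x y‖ ≤ ‖x‖ * ‖y‖)
    (hnorm : ∀ x, ‖x‖ ^ 2 = ‖inn x x‖)
    (he_inn : ∀ (α β : L) (A C : B), A ∈ I α → C ∈ I β →
      inn (e α A) (e β C) = if α = β then chi (A ⊓ C) else 0)
    (hdense : closure (Submodule.span ℂ {x : X | ∃ α : L, ∃ A ∈ I α, x = e α A}
      : Set X) = Set.univ)
    (hact_e : ∀ (α : L) (A C : B), A ∈ I α → act (e α A) (chi C) = e α (A ⊓ C))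
    -- the left action φ of 𝓐 on X; Φ A = φ(χ_A)
    (Φ : B → (X →L[ℂ] X))
    (hΦ : ∀ (A : B) (β : L), ∀ C ∈ I β, Φ A (e β C) = e β (θ β A ⊓ C))
    (A : B) :
    (Φ A ∈ closure (Submodule.span ℂ
        {T : X →L[ℂ] X | ∃ x y : X, ∀ z, T z = act x (inn y z)} : Set (X →L[ℂ] X)) ↔
      {α : L | θ α A ≠ ⊥}.Finite) ∧
    (∀ F : Finset L, ↑F = {α : L | θ α A ≠ ⊥} →
      ∀ z : X, Φ A z = ∑ α ∈ F, act (e α (θ α A)) (inn (e α (θ α A)) z)) := by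
  have hX : HilbertModuleAxioms inn act :=
    ⟨hinn_add_right, hinn_smul, hinn_star, hinn_act, hCS, hnorm⟩
  have hD := dense_iff_closure_eq.2 hdense
  have hΦ_eq {F : Finset L} (hF : ↑F = {α | θ α A ≠ ⊥}) :=
    eq_sum_rankOne hX he_inn hact_e hD (hRI · A) (hΦ A) hF
  refine ⟨⟨fun hmem => ?_, fun hfin => ?_⟩, fun F hF z => ?_⟩
  · refine finite_of_mem_closure_span_rankOne hX he_inn hD (hRI · A) (fun β => ?_) hmem
    rw [hΦ A β _ (hRI β A), inf_idem]
  · rw [hΦ_eq hfin.coe_toFinset]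
    exact subset_closure (Submodule.sum_mem _ fun α _ => Submodule.subset_span ⟨_, _, fun z => rfl⟩)
  · simp [hΦ_eq hF, hX.rankOne_apply]

/-- Let X = X(𝓑,𝓛,θ,𝓘_α) = ⊕_{α∈𝓛} X_α be the C*-correspondence over
𝓐(𝓑,𝓛,θ) ⊆ C₀(𝓑̂), with right action `act`, 𝓐-valued inner product `inn`, standard
vectors e_{α,A}, and left action φ (here given by the operators Φ A = φ(χ_A)).
Then φ(χ_A) is a generalized compact operator, i.e. φ(χ_A) belongs to
𝔎(X) = closed span of the rank-one operators Θ_{x,y} : z ↦ x·⟨y,z⟩,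
if and only if λ_A = |{α : θ_α(A) ≠ ∅}| is finite; and in that case
φ(χ_A) = Σ_{α∈Δ_A} Θ_{e_{α,θ_α(A)}, e_{α,θ_α(A)}}. -/
theorem phi_chi_compact_iff {B L X : Type*} [GeneralizedBooleanAlgebra B] [DecidableEq L]
    [NormedAddCommGroup X] [NormedSpace ℂ X]
    (θ : L → B → B) (hθ : ∀ α, IsBoolAction (θ α))
    (I : L → Set B) (hI : ∀ α, BoolIdeal (I α)) (hRI : ∀ (α : L) (A : B), θ α A ∈ I α)
    -- the 𝓐-valued inner product on X (⟨x,y⟩ = Σ_α x_α* y_α)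
    (inn : X → X → C₀(BoolCharSpace B, ℂ))
    -- the right action of 𝓐 on X
    (act : X → C₀(BoolCharSpace B, ℂ) → X)
    -- the standard vectors e_{α,A} (A ∈ 𝓘_α), spanning a dense subspace of X
    (e : L → B → X)
    (hinn_add_left : ∀ x y z, inn (x + y) z = inn x z + inn y z)
    (hinn_add_right : ∀ x y z, inn x (y + z) = inn x y + inn x z)
    (hinn_smul : ∀ (c : ℂ) (x y : X), inn x (c • y) = c • inn x y)
    (hinn_star : ∀ x y, star (inn x y) = inn y x)
    (hinn_act : ∀ x y f, inn x (act y f) = inn x y * f)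
    (hact_add : ∀ x y f, act (x + y) f = act x f + act y f)
    (hact_smul : ∀ (c : ℂ) x f, act (c • x) f = c • act x f)
    (hCS : ∀ x y, ‖inn x y‖ ≤ ‖x‖ * ‖y‖)
    (hnorm : ∀ x, ‖x‖ ^ 2 = ‖inn x x‖)
    (he_inn : ∀ (α β : L) (A C : B), A ∈ I α → C ∈ I β →
      inn (e α A) (e β C) = if α = β then chi (A ⊓ C) else 0)
    (hdense : closure (Submodule.span ℂ {x : X | ∃ α : L, ∃ A ∈ I α, x = e α A}
      : Set X) = Set.univ)
    (hact_e : ∀ (α : L) (A C : B), A ∈ I α → act (e α A) (chi C) = e α (A ⊓ C))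
    -- the left action φ of 𝓐 on X; Φ A = φ(χ_A)
    (Φ : B → (X →L[ℂ] X))
    (hΦ : ∀ (A : B) (β : L), ∀ C ∈ I β, Φ A (e β C) = e β (θ β A ⊓ C))
    (A : B) :
    (Φ A ∈ closure (Submodule.span ℂ
        {T : X →L[ℂ] X | ∃ x y : X, ∀ z, T z = act x (inn y z)} : Set (X →L[ℂ] X)) ↔
      {α : L | θ α A ≠ ⊥}.Finite) ∧
    (∀ F : Finset L, ↑F = {α : L | θ α A ≠ ⊥} →
      ∀ z : X, Φ A z = ∑ α ∈ F, act (e α (θ α A)) (inn (e α (θ α A)) z)) :=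
  phi_chi_compact_iff_general θ I hRI inn act e hinn_add_right hinn_smul hinn_star hinn_act hCS
    hnorm he_inn hdense hact_e Φ hΦ A
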